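/- If X is a vector space of holomorphic functions on the unit disk containing {f' : f ∈ N} and invariant under multiplication by H^∞, and if every η ∈ BMOA admits a weak factorization η' = φ₁ψ₁' + φ₂ψ₂' with φ_j, ψ_j ∈ H^∞, then N · BMOA' ⊆ X, where BMOA' = {η' : η ∈ BMOA}. -/

import Mathlib

open MeasureTheory Set Filter Finset

noncomputable section

/-- The open unit disk in ℂ. -/
def UD : Set ℂ := Metric.ball 0 1

/-- Holomorphic on the unit disk. -/
def HolOn (f : ℂ → ℂ) : Prop := DifferentiableOn ℂ f UD

/-- Bounded holomorphic functions on the disk (H^∞). -/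
def MemHinf (f : ℂ → ℂ) : Prop := HolOn f ∧ ∃ M : ℝ, ∀ z ∈ UD, ‖f z‖ ≤ M

/-- The Nevanlinna class: quotients u/v with u, v ∈ H^∞ and v zero-free on the disk. -/
def MemNev (f : ℂ → ℂ) : Prop :=
  ∃ u v : ℂ → ℂ, MemHinf u ∧ MemHinf v ∧ (∀ z ∈ UD, v z ≠ 0) ∧ ∀ z ∈ UD, f z = u z / v z

/-- Carleson measure on the unit disk (via Carleson disks). -/
def IsCarleson (μ : Measure ℂ) : Prop :=
  ∃ C : ℝ, ∀ ζ : ℂ, ‖ζ‖ = 1 → ∀ h : ℝ, 0 < h →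
    μ (Metric.closedBall ζ h ∩ UD) ≤ ENNReal.ofReal (C * h)

/-- The measure |F(z)|² (1-|z|)^{2n-1} dA(z) on the unit disk. -/
def wtMeasure (F : ℂ → ℂ) (n : ℕ) : Measure ℂ :=
  (volume.restrict UD).withDensity fun z => ENNReal.ofReal (‖F z‖ ^ 2 * (1 - ‖z‖) ^ (2 * n - 1))

/-- BMOA via the Carleson-measure characterization: w holomorphic on the disk and
|w'(z)|²(1-|z|)dA(z) a Carleson measure. -/
def MemBMOA (w : ℂ → ℂ) : Prop := HolOn w ∧ IsCarleson (wtMeasure (deriv w) 1)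

/-- Outer function: zero-free on the disk and the circular means of log|v| tend to log|v(0)|. -/
def Outer (v : ℂ → ℂ) : Prop :=
  (∀ z ∈ UD, v z ≠ 0) ∧
  Filter.Tendsto
    (fun r : ℝ => (2 * Real.pi)⁻¹ *
      ∫ θ in (0:ℝ)..(2 * Real.pi), Real.log ‖v (↑r * Complex.exp (↑θ * Complex.I))‖)
    (nhdsWithin 1 (Set.Iio 1)) (nhds (Real.log ‖v 0‖))

/-- The Smirnov class: quotients u/v with u, v ∈ H^∞ and v outer. -/
def MemSmirnov (f : ℂ → ℂ) : Prop :=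
  ∃ u v : ℂ → ℂ, MemHinf u ∧ MemHinf v ∧ Outer v ∧ ∀ z ∈ UD, f z = u z / v z

/-- f belongs to the class X, viewed as functions on the unit disk: some member of X
agrees with f on the disk. -/
def MemOn (X : Set (ℂ → ℂ)) (f : ℂ → ℂ) : Prop := ∃ F ∈ X, ∀ z ∈ UD, F z = f z

/-! For `g ∈ N` and `ψ ∈ H^∞` the Leibniz rule gives `g ψ' = (g ψ)' - ψ g'`, and both terms lie
in `X`: `g ψ ∈ N`, and `ψ g'` is an `H^∞`-multiple of `g' ∈ N'`. The weak factorization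
`η' = φ₁ ψ₁' + φ₂ ψ₂'` then writes `g η'` as `φ₁ (g ψ₁') + φ₂ (g ψ₂')`. -/

lemma MemOn.congr {X : Set (ℂ → ℂ)} {f g : ℂ → ℂ} (hf : MemOn X f)
    (h : ∀ z ∈ UD, f z = g z) : MemOn X g := by
  obtain ⟨F, hF, hFf⟩ := hf
  exact ⟨F, hF, fun z hz => (hFf z hz).trans (h z hz)⟩

lemma MemOn.add {X : Submodule ℂ (ℂ → ℂ)} {f g : ℂ → ℂ}
    (hf : MemOn (X : Set (ℂ → ℂ)) f) (hg : MemOn (X : Set (ℂ → ℂ)) g) :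
    MemOn (X : Set (ℂ → ℂ)) (fun z => f z + g z) := by
  obtain ⟨F, hF, hFf⟩ := hf
  obtain ⟨G, hG, hGg⟩ := hg
  exact ⟨F + G, X.add_mem hF hG, fun z hz => by rw [Pi.add_apply, hFf z hz, hGg z hz]⟩

lemma MemOn.sub {X : Submodule ℂ (ℂ → ℂ)} {f g : ℂ → ℂ}
    (hf : MemOn (X : Set (ℂ → ℂ)) f) (hg : MemOn (X : Set (ℂ → ℂ)) g) :
    MemOn (X : Set (ℂ → ℂ)) (fun z => f z - g z) := by
  obtain ⟨F, hF, hFf⟩ := hf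
  obtain ⟨G, hG, hGg⟩ := hg
  exact ⟨F - G, X.sub_mem hF hG, fun z hz => by rw [Pi.sub_apply, hFf z hz, hGg z hz]⟩

lemma MemHinf.mul {f g : ℂ → ℂ} (hf : MemHinf f) (hg : MemHinf g) :
    MemHinf (fun z => f z * g z) := by
  obtain ⟨hf_hol, M, hM⟩ := hf
  obtain ⟨hg_hol, N, hN⟩ := hg
  refine ⟨hf_hol.mul hg_hol, M * N, fun z hz => ?_⟩
  rw [norm_mul]
  exact mul_le_mul (hM z hz) (hN z hz) (norm_nonneg _) ((norm_nonneg _).trans (hM z hz))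

lemma MemNev.differentiableOn {g : ℂ → ℂ} (hg : MemNev g) : DifferentiableOn ℂ g UD := by
  obtain ⟨u, v, hu, hv, hv_ne, hg_eq⟩ := hg
  exact (hu.1.div hv.1 hv_ne).congr hg_eq

lemma MemNev.mul_memHinf {g ψ : ℂ → ℂ} (hg : MemNev g) (hψ : MemHinf ψ) :
    MemNev (fun z => g z * ψ z) := by
  obtain ⟨u, v, hu, hv, hv_ne, hg_eq⟩ := hg
  refine ⟨fun z => u z * ψ z, v, hu.mul hψ, hv, hv_ne, fun z hz => ?_⟩
  dsimp only
  rw [hg_eq z hz, div_mul_eq_mul_div]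

lemma memOn_mul_deriv_of_memNev_of_memHinf {X : Submodule ℂ (ℂ → ℂ)}
    (hXideal : ∀ (h f : ℂ → ℂ), MemHinf h → MemOn (X : Set (ℂ → ℂ)) f →
      MemOn (X : Set (ℂ → ℂ)) (fun z => h z * f z))
    (hXN' : ∀ f : ℂ → ℂ, MemNev f → MemOn (X : Set (ℂ → ℂ)) (deriv f))
    {g ψ : ℂ → ℂ} (hg : MemNev g) (hψ : MemHinf ψ) :
    MemOn (X : Set (ℂ → ℂ)) (fun z => g z * deriv ψ z) := by
  have h_prod := hXN' _ (hg.mul_memHinf hψ)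
  have h_mul := hXideal ψ (deriv g) hψ (hXN' g hg)
  refine (h_prod.sub h_mul).congr fun z hz => ?_
  have hz_nhds : UD ∈ nhds z := Metric.isOpen_ball.mem_nhds hz
  rw [deriv_fun_mul (hg.differentiableOn.differentiableAt hz_nhds)
    (hψ.1.differentiableAt hz_nhds)]
  ring

theorem stmt14_general (X : Submodule ℂ (ℂ → ℂ))
    (hXideal : ∀ (h f : ℂ → ℂ), MemHinf h → MemOn (X : Set (ℂ → ℂ)) f →
      MemOn (X : Set (ℂ → ℂ)) (fun z => h z * f z))
    (hXN' : ∀ f : ℂ → ℂ, MemNev f → MemOn (X : Set (ℂ → ℂ)) (deriv f))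
    (hAP : ∀ η : ℂ → ℂ, MemBMOA η →
      ∃ φ₁ ψ₁ φ₂ ψ₂ : ℂ → ℂ, MemHinf φ₁ ∧ MemHinf ψ₁ ∧ MemHinf φ₂ ∧ MemHinf ψ₂ ∧
        ∀ z ∈ UD, deriv η z = φ₁ z * deriv ψ₁ z + φ₂ z * deriv ψ₂ z) :
    ∀ g η : ℂ → ℂ, MemNev g → MemBMOA η →
      MemOn (X : Set (ℂ → ℂ)) (fun z => g z * deriv η z) := by
  intro g η hg hη
  obtain ⟨φ₁, ψ₁, φ₂, ψ₂, hφ₁, hψ₁, hφ₂, hψ₂, h_factor⟩ := hAP η hη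
  have h₁ := hXideal φ₁ _ hφ₁ (memOn_mul_deriv_of_memNev_of_memHinf hXideal hXN' hg hψ₁)
  have h₂ := hXideal φ₂ _ hφ₂ (memOn_mul_deriv_of_memNev_of_memHinf hXideal hXN' hg hψ₂)
  refine (h₁.add h₂).congr fun z hz => ?_
  rw [h_factor z hz]
  ring

/-- given the Aleksandrov–Peller weak factorization of BMOA derivatives,
every H^∞-invariant vector space X of holomorphic functions containing N' contains N·BMOA'. -/
theorem stmt14 (X : Submodule ℂ (ℂ → ℂ)) (hXhol : ∀ f ∈ X, HolOn f)
    (hXideal : ∀ (h f : ℂ → ℂ), MemHinf h → MemOn (X : Set (ℂ → ℂ)) f →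
      MemOn (X : Set (ℂ → ℂ)) (fun z => h z * f z))
    (hXN' : ∀ f : ℂ → ℂ, MemNev f → MemOn (X : Set (ℂ → ℂ)) (deriv f))
    (hAP : ∀ η : ℂ → ℂ, MemBMOA η →
      ∃ φ₁ ψ₁ φ₂ ψ₂ : ℂ → ℂ, MemHinf φ₁ ∧ MemHinf ψ₁ ∧ MemHinf φ₂ ∧ MemHinf ψ₂ ∧
        ∀ z ∈ UD, deriv η z = φ₁ z * deriv ψ₁ z + φ₂ z * deriv ψ₂ z) :
    ∀ g η : ℂ → ℂ, MemNev g → MemBMOA η →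
      MemOn (X : Set (ℂ → ℂ)) (fun z => g z * deriv η z) :=
  stmt14_general X hXideal hXN' hAP
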